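/- arXiv:2604.12405 — 3 statements merged into one kernel-verified Lean document; each statement's English description precedes it below -/
import Mathlib

section
/- Let V = (wE + (1−w)E')/G where E, E' are independent standard exponentials, G is an independent gamma random variable with shape 1/ξ (for ξ > 0) and unit rate, and w ∈ (0,1), w ≠ 1/2. Then for all x ≥ 0, P(V > x) = [w(1 + x/w)^{−1/ξ} − (1−w)(1 + x/(1−w))^{−1/ξ}]/(2w − 1). -/
/-!
Conditionally on `G = g`, the event is `w E + (1 - w) E' > x g`. A weighted sum `a E + b E'` of
independent standard exponentials with `a ≠ b` has survival function
`(a e^{-t/a} - b e^{-t/b}) / (a - b)`, so averaging over `G` only requires the Laplace transform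
`E[e^{-c G}] = (1 + c)^{-1/ξ}` of the Gamma law, applied with `c = x / a` and `c = x / b`.
-/

open MeasureTheory ProbabilityTheory Real Set

lemma measureReal_prod_apply {α β : Type*} [MeasurableSpace α] [MeasurableSpace β]
    {μ : Measure α} {ν : Measure β} [SFinite ν] [IsFiniteMeasure ν] {s : Set (α × β)}
    (hs : MeasurableSet s) : (μ.prod ν).real s = ∫ x, ν.real (Prod.mk x ⁻¹' s) ∂μ := by
  rw [measureReal_def, Measure.prod_apply hs,
    ← integral_toReal (measurable_measure_prodMk_left hs).aemeasurable
      (ae_of_all _ fun _ => measure_lt_top _ _)]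
  rfl

lemma measurable_gammaPDF (a r : ℝ) : Measurable (gammaPDF a r) :=
  (measurable_gammaPDFReal a r).ennreal_ofReal

lemma ae_pos_gammaMeasure (a r : ℝ) : ∀ᵐ x ∂gammaMeasure a r, 0 < x := by
  rw [gammaMeasure, ae_withDensity_iff (measurable_gammaPDF a r)]
  filter_upwards [Measure.ae_ne volume 0] with x hx hpdf
  exact lt_of_le_of_ne (not_lt.mp fun h => hpdf (gammaPDF_of_neg h)) hx.symm

lemma integral_gammaMeasure {a r : ℝ} (ha : 0 < a) (hr : 0 < r) (f : ℝ → ℝ) :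
    ∫ x, f x ∂gammaMeasure a r = ∫ x in Ioi 0, gammaPDFReal a r x * f x := by
  rw [gammaMeasure, integral_withDensity_eq_integral_toReal_smul
    (measurable_gammaPDF a r) (ae_of_all _ fun _ => ENNReal.ofReal_lt_top),
    ← integral_Ici_eq_integral_Ioi,
    setIntegral_eq_integral_of_forall_compl_eq_zero fun x hx => ?_]
  · simp only [gammaPDF, ENNReal.toReal_ofReal (gammaPDFReal_nonneg ha hr _), smul_eq_mul]
  · rw [gammaPDFReal, if_neg (notMem_Ici.mp hx |>.not_ge), zero_mul]

lemma measureReal_expMeasure_Ioi {r : ℝ} (hr : 0 < r) (s : ℝ) :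
    (expMeasure r).real (Ioi s) = exp (-(r * max s 0)) := by
  have := isProbabilityMeasure_expMeasure hr
  rw [← compl_Iic, probReal_compl_eq_one_sub measurableSet_Iic, ← cdf_eq_real,
    cdf_expMeasure_eq hr]
  split_ifs with hs
  · rw [max_eq_left hs]; ring
  · rw [max_eq_right (not_le.mp hs).le]; simp

lemma integral_exp_neg_mul_gammaMeasure {a r c : ℝ} (ha : 0 < a) (hr : 0 < r) (hrc : 0 < r + c) :
    ∫ x, exp (-(c * x)) ∂gammaMeasure a r = (r / (r + c)) ^ a := by
  rw [integral_gammaMeasure ha hr]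
  have hpdf : ∀ x ∈ Ioi (0 : ℝ), gammaPDFReal a r x * exp (-(c * x))
      = r ^ a / Gamma a * (x ^ (a - 1) * exp (-((r + c) * x))) := by
    intro x hx
    rw [gammaPDFReal, if_pos (le_of_lt hx), add_mul, neg_add, exp_add]
    ring
  rw [setIntegral_congr_fun measurableSet_Ioi hpdf, integral_const_mul,
    integral_rpow_mul_exp_neg_mul_Ioi ha hrc, div_rpow hr.le hrc.le, div_rpow zero_le_one hrc.le,
    one_rpow]
  field_simp [(Gamma_pos_of_pos ha).ne']

lemma integrable_exp_neg_mul_gammaMeasure {a r c : ℝ} (ha : 0 < a) (hr : 0 < r) (hc : 0 ≤ c) :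
    Integrable (fun x => exp (-(c * x))) (gammaMeasure a r) := by
  have := isProbabilityMeasure_gammaMeasure ha hr
  refine Integrable.of_bound (by fun_prop) 1 ?_
  filter_upwards [ae_pos_gammaMeasure a r] with x hx
  rw [norm_of_nonneg (exp_nonneg _), exp_le_one_iff, neg_nonpos]
  positivity

lemma integral_exp_mul_add {k : ℝ} (hk : k ≠ 0) (C u v : ℝ) :
    ∫ x in u..v, exp (k * x + C) = (exp (k * v + C) - exp (k * u + C)) / k := by
  rw [intervalIntegral.integral_comp_mul_add (fun x => exp x) hk, integral_exp, smul_eq_mul]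
  field_simp

lemma integral_Ioi_exp_neg_mul_exp_neg_max {a b t : ℝ} (ha : 0 < a) (hb : 0 < b) (hab : a ≠ b)
    (ht : 0 ≤ t) :
    ∫ e in Ioi 0, exp (-e) * exp (-max ((t - a * e) / b) 0)
      = (a * exp (-t / a) - b * exp (-t / b)) / (a - b) := by
  have hint : IntegrableOn (fun e => exp (-e) * exp (-max ((t - a * e) / b) 0)) (Ioi 0) := by
    refine (exp_neg_integrableOn_Ioi 0 one_pos).mono' (by fun_prop) (ae_of_all _ fun e => ?_)
    rw [norm_of_nonneg (by positivity), neg_one_mul]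
    exact mul_le_of_le_one_right (exp_nonneg _) (exp_le_one_iff.mpr (by simp))
  have hta : 0 ≤ t / a := div_nonneg ht ha.le
  have hk : a / b - 1 ≠ 0 := sub_ne_zero.mpr (div_ne_one_of_ne hab)
  have hbelow : ∀ e ∈ Ioc 0 (t / a),
      exp (-e) * exp (-max ((t - a * e) / b) 0) = exp ((a / b - 1) * e + -t / b) := by
    intro e ⟨_, he⟩
    rw [max_eq_left (div_nonneg (by linarith [(le_div_iff₀' ha).mp he]) hb.le), ← exp_add]
    congr 1
    field_simp
    ring
  have habove : ∀ e ∈ Ioi (t / a), exp (-e) * exp (-max ((t - a * e) / b) 0) = exp (-e) := by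
    intro e he
    rw [max_eq_right (div_nonpos_of_nonpos_of_nonneg
      (by linarith [(div_lt_iff₀' ha).mp (mem_Ioi.mp he)]) hb.le)]
    simp
  rw [← Ioc_union_Ioi_eq_Ioi hta, setIntegral_union (Ioc_disjoint_Ioi le_rfl) measurableSet_Ioi
      (hint.mono_set Ioc_subset_Ioi_self) (hint.mono_set (Ioi_subset_Ioi hta)),
    setIntegral_congr_fun measurableSet_Ioc hbelow, setIntegral_congr_fun measurableSet_Ioi habove,
    ← intervalIntegral.integral_of_le hta, integral_exp_mul_add hk, integral_exp_neg_Ioi]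
  have hexp : (a / b - 1) * (t / a) + -t / b = -t / a := by field_simp; ring
  rw [hexp, mul_zero, zero_add, neg_div]
  field_simp
  ring

lemma measureReal_expMeasure_one_prod_lt_mul_add_mul {a b t : ℝ} (ha : 0 < a) (hb : 0 < b)
    (hab : a ≠ b) (ht : 0 ≤ t) :
    ((expMeasure 1).prod (expMeasure 1)).real {z | t < a * z.1 + b * z.2}
      = (a * exp (-t / a) - b * exp (-t / b)) / (a - b) := by
  have := isProbabilityMeasure_expMeasure one_pos
  have hsection (e : ℝ) : Prod.mk e ⁻¹' {z : ℝ × ℝ | t < a * z.1 + b * z.2}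
      = Ioi ((t - a * e) / b) := by
    ext e'
    simp only [mem_preimage, mem_ofPred_eq, mem_Ioi, div_lt_iff₀ hb]
    constructor <;> intro h <;> linarith
  have hdensity : ∀ e ∈ Ioi (0 : ℝ), gammaPDFReal 1 1 e * exp (-(1 * max ((t - a * e) / b) 0))
      = exp (-e) * exp (-max ((t - a * e) / b) 0) := by
    intro e he
    simp [gammaPDFReal, (mem_Ioi.mp he).le]
  rw [measureReal_prod_apply (measurableSet_lt measurable_const (by fun_prop))]
  simp_rw [hsection, measureReal_expMeasure_Ioi one_pos]
  rw [expMeasure, integral_gammaMeasure one_pos one_pos,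
    setIntegral_congr_fun measurableSet_Ioi hdensity,
    integral_Ioi_exp_neg_mul_exp_neg_max ha hb hab ht]

lemma ProbabilityTheory.iIndepFun.map_prodMk_prodMk_eq_prod {Ω β : Type*} [MeasurableSpace Ω]
    [MeasurableSpace β] {μ : Measure Ω} [IsProbabilityMeasure μ] {X Y Z : Ω → β}
    (hX : Measurable X) (hY : Measurable Y) (hZ : Measurable Z) (h : iIndepFun ![X, Y, Z] μ) :
    μ.map (fun ω => (Z ω, (X ω, Y ω))) = (μ.map Z).prod ((μ.map X).prod (μ.map Y)) := by
  have hmeas : ∀ i, Measurable (![X, Y, Z] i) := by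
    intro i; fin_cases i <;> assumption
  have hXY : IndepFun X Y μ := by simpa using h.indepFun (show (0 : Fin 3) ≠ 1 by decide)
  have hXYZ : IndepFun (fun ω => (X ω, Y ω)) Z μ := by
    simpa using h.indepFun_prodMk hmeas 0 1 2 (by decide) (by decide)
  rw [(indepFun_iff_map_prod_eq_prod_map_map hZ.aemeasurable
      (hX.prodMk hY).aemeasurable).mp hXYZ.symm,
    (indepFun_iff_map_prod_eq_prod_map_map hX.aemeasurable hY.aemeasurable).mp hXY]

lemma measureReal_gammaMeasure_prod_lt_div {s a b x : ℝ} (hs : 0 < s) (ha : 0 < a) (hb : 0 < b)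
    (hab : a ≠ b) (hx : 0 ≤ x) :
    ((gammaMeasure s 1).prod ((expMeasure 1).prod (expMeasure 1))).real
        {z | x < (a * z.2.1 + b * z.2.2) / z.1}
      = (a * (1 + x / a) ^ (-s) - b * (1 + x / b) ^ (-s)) / (a - b) := by
  have := isProbabilityMeasure_expMeasure one_pos
  have hmeas : MeasurableSet {z : ℝ × ℝ × ℝ | x < (a * z.2.1 + b * z.2.2) / z.1} :=
    measurableSet_lt measurable_const (by fun_prop)
  have hsection : ∀ᵐ g ∂gammaMeasure s 1,
      ((expMeasure 1).prod (expMeasure 1)).real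
          (Prod.mk g ⁻¹' {z | x < (a * z.2.1 + b * z.2.2) / z.1})
        = (a * exp (-(x / a * g)) - b * exp (-(x / b * g))) / (a - b) := by
    filter_upwards [ae_pos_gammaMeasure s 1] with g hg
    have hpre : Prod.mk g ⁻¹' {z : ℝ × ℝ × ℝ | x < (a * z.2.1 + b * z.2.2) / z.1}
        = {z | x * g < a * z.1 + b * z.2} := by
      ext z
      simp only [mem_preimage, mem_ofPred_eq, lt_div_iff₀ hg]
    rw [hpre, measureReal_expMeasure_one_prod_lt_mul_add_mul ha hb hab (by positivity)]
    ring_nf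
  have hlaplace (c : ℝ) (hc : 0 ≤ c) :
      ∫ g, exp (-(c * g)) ∂gammaMeasure s 1 = (1 + c) ^ (-s) := by
    rw [integral_exp_neg_mul_gammaMeasure hs one_pos (by linarith), one_div,
      inv_rpow (by positivity), rpow_neg (by positivity)]
  have hint (c : ℝ) (hc : 0 ≤ c) := integrable_exp_neg_mul_gammaMeasure hs one_pos hc
  rw [measureReal_prod_apply hmeas, integral_congr_ae hsection, integral_div,
    integral_sub ((hint _ (by positivity)).const_mul a) ((hint _ (by positivity)).const_mul b),
    integral_const_mul, integral_const_mul, hlaplace _ (by positivity),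
    hlaplace _ (by positivity)]

/-- Survival function of `V = (wE + (1-w)E')/G` where `E, E'` are iid standard exponential,
`G ~ Gamma(1/ξ, 1)` independent, `w ∈ (0,1) \ {1/2}`:
`P(V > x) = [w(1+x/w)^{-1/ξ} - (1-w)(1+x/(1-w))^{-1/ξ}]/(2w-1)` for `x ≥ 0`. -/
theorem surv_V_general_w
    {Ω : Type*} [MeasurableSpace Ω] (μ : Measure Ω) [IsProbabilityMeasure μ]
    (E E' G : Ω → ℝ) (hEm : Measurable E) (hE'm : Measurable E') (hGm : Measurable G)
    (ξ : ℝ) (hξ : 0 < ξ) (w : ℝ) (hw : w ∈ Set.Ioo (0 : ℝ) 1) (hw2 : w ≠ 1 / 2)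
    (hE : μ.map E = expMeasure 1) (hE' : μ.map E' = expMeasure 1)
    (hG : μ.map G = gammaMeasure (1 / ξ) 1)
    (hind : iIndepFun ![E, E', G] μ) :
    ∀ x : ℝ, 0 ≤ x →
      (μ {ω | (w * E ω + (1 - w) * E' ω) / G ω > x}).toReal
        = (w * (1 + x / w) ^ (-1 / ξ) - (1 - w) * (1 + x / (1 - w)) ^ (-1 / ξ))
            / (2 * w - 1) := by
  intro x hx
  obtain ⟨hw0, hw1⟩ := hw
  have hw1w : w ≠ 1 - w := fun h => hw2 (by linarith)
  have hlaw : μ.map (fun ω => (G ω, (E ω, E' ω)))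
      = (gammaMeasure (1 / ξ) 1).prod ((expMeasure 1).prod (expMeasure 1)) := by
    rw [hind.map_prodMk_prodMk_eq_prod hEm hE'm hGm, hE, hE', hG]
  have hmeas : MeasurableSet {z : ℝ × ℝ × ℝ | x < (w * z.2.1 + (1 - w) * z.2.2) / z.1} :=
    measurableSet_lt measurable_const (by fun_prop)
  have hevent : {ω | (w * E ω + (1 - w) * E' ω) / G ω > x}
      = (fun ω => (G ω, (E ω, E' ω))) ⁻¹' {z | x < (w * z.2.1 + (1 - w) * z.2.2) / z.1} :=
    rfl
  rw [← measureReal_def, hevent, ← map_measureReal_apply (by fun_prop) hmeas, hlaw,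
    measureReal_gammaMeasure_prod_lt_div (by positivity) hw0 (by linarith) hw1w hx,
    neg_div, show w - (1 - w) = 2 * w - 1 by ring]
end

section
/- Let V = (wE + (1−w)E')/G with the setup as before and shape parameter 1/ξ, w = 1/2. Then for all x ≥ 0, P(V > x) = (1 + 2x)^{−1/ξ − 1} (1 + 2x(1 + 1/ξ)). -/
/-! Conditionally on `G = g > 0` the event is `E + E' > 2xg`, and the sum of two independent
standard exponentials has survival function `t ↦ e^{-t} (1 + t)`. Hence
`P(V > x) = E[e^{-2xG} (1 + 2xG)]`, and the Gamma integrals `∫₀^∞ g^{a-1} e^{-bg} dg = Γ(a) b^{-a}`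
(for `a = 1/ξ` and `a = 1/ξ + 1`) give the closed form. -/

open MeasureTheory ProbabilityTheory Real Set
open scoped ENNReal

namespace ProbabilityTheory

instance (a r : ℝ) : SFinite (gammaMeasure a r) :=
  inferInstanceAs (SFinite (volume.withDensity (gammaPDF a r)))

instance (r : ℝ) : SFinite (expMeasure r) :=
  inferInstanceAs (SFinite (gammaMeasure 1 r))

lemma gammaMeasure_Iic_zero (a r : ℝ) : gammaMeasure a r (Iic 0) = 0 := by
  rw [gammaMeasure, withDensity_apply _ measurableSet_Iic, ← setLIntegral_congr Iio_ae_eq_Iic]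
  exact lintegral_gammaPDF_of_nonpos le_rfl

lemma ae_gammaMeasure_pos (a r : ℝ) : ∀ᵐ x ∂gammaMeasure a r, 0 < x :=
  ae_iff.2 (measure_mono_null (fun _ => not_lt.1) (gammaMeasure_Iic_zero a r))

lemma lintegral_gammaMeasure (a r : ℝ) (f : ℝ → ℝ≥0∞) :
    ∫⁻ x, f x ∂gammaMeasure a r
      = ∫⁻ x in Ioi 0, ENNReal.ofReal (r ^ a / Gamma a * x ^ (a - 1) * exp (-(r * x))) * f x := by
  rw [gammaMeasure, lintegral_withDensity_eq_lintegral_mul_non_measurable (f := gammaPDF a r) _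
    (measurable_gammaPDFReal a r).ennreal_ofReal (ae_of_all _ fun _ => ENNReal.ofReal_lt_top),
    ← setLIntegral_eq_of_support_subset (s := Ici 0), setLIntegral_congr Ioi_ae_eq_Ici.symm]
  · exact setLIntegral_congr_fun measurableSet_Ioi fun x hx => by
      rw [Pi.mul_apply, gammaPDF_of_nonneg (le_of_lt hx)]
  · intro x hx
    by_contra hneg
    exact hx (by simp [gammaPDF_of_neg (not_le.1 hneg)])

lemma lintegral_expMeasure (r : ℝ) (f : ℝ → ℝ≥0∞) :
    ∫⁻ x, f x ∂expMeasure r = ∫⁻ x in Ioi 0, ENNReal.ofReal (r * exp (-(r * x))) * f x := by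
  simp only [expMeasure, lintegral_gammaMeasure, rpow_one, Gamma_one, div_one, sub_self, rpow_zero,
    mul_one]

lemma expMeasure_Ioi {r t : ℝ} (hr : 0 < r) (ht : 0 ≤ t) :
    expMeasure r (Ioi t) = ENNReal.ofReal (exp (-(r * t))) := by
  have := isProbabilityMeasure_expMeasure hr
  rw [← compl_Iic, prob_compl_eq_one_sub measurableSet_Iic, ← ofReal_cdf, cdf_expMeasure_eq hr,
    if_pos ht, ← ENNReal.ofReal_one, ← ENNReal.ofReal_sub _ (sub_nonneg.2 (exp_le_one_iff.2 ?_)),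
    sub_sub_cancel]
  exact neg_nonpos.2 (mul_nonneg hr.le ht)

lemma expMeasure_Ioi_of_nonpos {r t : ℝ} (hr : 0 < r) (ht : t ≤ 0) : expMeasure r (Ioi t) = 1 := by
  have := isProbabilityMeasure_expMeasure hr
  refine le_antisymm prob_le_one ?_
  calc (1 : ℝ≥0∞) = expMeasure r (Ioi 0) := by simp [expMeasure_Ioi hr le_rfl]
    _ ≤ expMeasure r (Ioi t) := measure_mono (Ioi_subset_Ioi ht)

lemma setLIntegral_Ioi_ofReal_mul_exp_neg_mul {r : ℝ} (hr : 0 < r) (t : ℝ) :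
    ∫⁻ x in Ioi t, ENNReal.ofReal (r * exp (-(r * x))) = ENNReal.ofReal (exp (-(r * t))) := by
  have hint : IntegrableOn (fun x => exp (-r * x)) (Ioi t) :=
    integrableOn_exp_mul_Ioi (by linarith) t
  simp_rw [← neg_mul]
  rw [← ofReal_integral_eq_lintegral_ofReal (hint.const_mul r)
    (ae_of_all _ fun x => by positivity), integral_const_mul, integral_exp_mul_Ioi (by linarith)]
  field_simp

lemma expMeasure_prod_setOf_lt_add {r t : ℝ} (hr : 0 < r) (ht : 0 ≤ t) :
    (expMeasure r).prod (expMeasure r) {p : ℝ × ℝ | t < p.1 + p.2}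
      = ENNReal.ofReal (exp (-(r * t)) * (1 + r * t)) := by
  have hslice (a : ℝ) : Prod.mk a ⁻¹' {p : ℝ × ℝ | t < p.1 + p.2} = Ioi (t - a) := by
    ext b; simp only [mem_preimage, mem_ofPred_eq, mem_Ioi]; constructor <;> intro h <;> linarith
  have hbelow : ∫⁻ a in Ioc 0 t, ENNReal.ofReal (r * exp (-(r * a))) * expMeasure r (Ioi (t - a))
      = ENNReal.ofReal (r * exp (-(r * t)) * t) := by
    rw [setLIntegral_congr_fun measurableSet_Ioc fun a ha => by
      rw [expMeasure_Ioi hr (sub_nonneg.2 ha.2), ← ENNReal.ofReal_mul (by positivity), mul_assoc,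
        ← exp_add, show -(r * a) + -(r * (t - a)) = -(r * t) by ring],
      lintegral_const, Measure.restrict_apply MeasurableSet.univ, univ_inter, volume_Ioc, sub_zero,
      ← ENNReal.ofReal_mul (by positivity)]
  have habove : ∫⁻ a in Ioi t, ENNReal.ofReal (r * exp (-(r * a))) * expMeasure r (Ioi (t - a))
      = ENNReal.ofReal (exp (-(r * t))) := by
    rw [setLIntegral_congr_fun measurableSet_Ioi fun a ha => by
      rw [expMeasure_Ioi_of_nonpos hr (sub_nonpos.2 (le_of_lt ha)), mul_one],
      setLIntegral_Ioi_ofReal_mul_exp_neg_mul hr]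
  rw [Measure.prod_apply (measurableSet_lt measurable_const (by fun_prop))]
  simp_rw [hslice]
  rw [lintegral_expMeasure, ← Ioc_union_Ioi_eq_Ioi ht,
    lintegral_union measurableSet_Ioi (Ioc_disjoint_Ioi le_rfl), hbelow, habove,
    ← ENNReal.ofReal_add (by positivity) (exp_pos _).le]
  congr 1; ring

lemma integrableOn_rpow_mul_exp_neg_mul_Ioi {a r : ℝ} (ha : 0 < a) (hr : 0 < r) :
    IntegrableOn (fun t : ℝ => t ^ (a - 1) * exp (-(r * t))) (Ioi 0) :=
  -- a non-integrable function has Bochner integral `0`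
  .of_integral_ne_zero <| by
    rw [integral_rpow_mul_exp_neg_mul_Ioi ha hr]
    exact (mul_pos (by positivity) (Gamma_pos_of_pos ha)).ne'

lemma lintegral_gammaMeasure_exp_neg_mul_one_add {a r s : ℝ} (ha : 0 < a) (hr : 0 < r)
    (hs : 0 ≤ s) :
    ∫⁻ x, ENNReal.ofReal (exp (-(s * x)) * (1 + s * x)) ∂gammaMeasure a r
      = ENNReal.ofReal (r ^ a * (r + s) ^ (-a - 1) * (r + s * (1 + a))) := by
  have hb : 0 < r + s := by linarith
  have hI₁ := (integrableOn_rpow_mul_exp_neg_mul_Ioi ha hb).const_mul (r ^ a / Gamma a)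
  have hI₂ := (integrableOn_rpow_mul_exp_neg_mul_Ioi (by linarith : 0 < a + 1) hb).const_mul
    (r ^ a * s / Gamma a)
  have hsplit : ∀ x ∈ Ioi (0 : ℝ),
      ENNReal.ofReal (r ^ a / Gamma a * x ^ (a - 1) * exp (-(r * x)))
        * ENNReal.ofReal (exp (-(s * x)) * (1 + s * x))
      = ENNReal.ofReal (r ^ a / Gamma a * (x ^ (a - 1) * exp (-((r + s) * x)))
        + r ^ a * s / Gamma a * (x ^ (a + 1 - 1) * exp (-((r + s) * x)))) := by
    intro x (hx : 0 < x)
    rw [← ENNReal.ofReal_mul (by positivity), add_sub_cancel_right, rpow_sub_one hx.ne',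
      show -((r + s) * x) = -(r * x) + -(s * x) by ring, exp_add]
    congr 1
    field_simp
  rw [lintegral_gammaMeasure, setLIntegral_congr_fun measurableSet_Ioi hsplit,
    ← ofReal_integral_eq_lintegral_ofReal (hI₁.fun_add hI₂), integral_add hI₁ hI₂,
    integral_const_mul, integral_const_mul, integral_rpow_mul_exp_neg_mul_Ioi ha hb,
    integral_rpow_mul_exp_neg_mul_Ioi (by linarith) hb, Gamma_add_one ha.ne']
  · congr 1
    have h₁ : (1 / (r + s)) ^ a = (r + s) ^ (-a - 1) * (r + s) := by
      rw [one_div, inv_rpow hb.le, ← rpow_neg hb.le, ← rpow_add_one hb.ne']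
      ring_nf
    have h₂ : (1 / (r + s)) ^ (a + 1) = (r + s) ^ (-a - 1) := by
      rw [one_div, inv_rpow hb.le, ← rpow_neg hb.le]
      ring_nf
    rw [h₁, h₂]
    field_simp
    ring
  · filter_upwards [ae_restrict_mem measurableSet_Ioi] with x (hx : 0 < x)
    positivity

lemma iIndepFun.map_prodMk_prodMk_eq_prod_s5 {Ω β : Type*} [MeasurableSpace Ω]
    [MeasurableSpace β] {μ : Measure Ω} [IsFiniteMeasure μ] {X Y Z : Ω → β}
    (hX : Measurable X) (hY : Measurable Y) (hZ : Measurable Z) (h : iIndepFun ![X, Y, Z] μ) :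
    μ.map (fun ω => ((X ω, Y ω), Z ω)) = ((μ.map X).prod (μ.map Y)).prod (μ.map Z) := by
  have hmeas : ∀ i, Measurable (![X, Y, Z] i) := by
    intro i; fin_cases i <;> assumption
  have hXY_Z : IndepFun (fun ω => (X ω, Y ω)) Z μ :=
    h.indepFun_prodMk hmeas 0 1 2 (by decide) (by decide)
  have hX_Y : IndepFun X Y μ := h.indepFun (i := 0) (j := 1) (by decide)
  rw [hXY_Z.map_prod_eq_prod_map_map (hX.prodMk hY).aemeasurable hZ.aemeasurable,
    hX_Y.map_prod_eq_prod_map_map hX.aemeasurable hY.aemeasurable]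

lemma expMeasure_prod_prod_gammaMeasure_setOf_lt_add_div {a r ρ y : ℝ} (ha : 0 < a)
    (hr : 0 < r) (hρ : 0 < ρ) (hy : 0 ≤ y) :
    ((expMeasure r).prod (expMeasure r)).prod (gammaMeasure a ρ)
        {p : (ℝ × ℝ) × ℝ | y < (p.1.1 + p.1.2) / p.2}
      = ENNReal.ofReal (ρ ^ a * (ρ + r * y) ^ (-a - 1) * (ρ + r * y * (1 + a))) := by
  rw [Measure.prod_apply_symm (measurableSet_lt measurable_const (by fun_prop)),
    ← lintegral_gammaMeasure_exp_neg_mul_one_add ha hρ (by positivity)]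
  refine lintegral_congr_ae ?_
  filter_upwards [ae_gammaMeasure_pos a ρ] with g hg
  have hslice : (fun q => (q, g)) ⁻¹' {p : (ℝ × ℝ) × ℝ | y < (p.1.1 + p.1.2) / p.2}
      = {q : ℝ × ℝ | y * g < q.1 + q.2} := by
    ext q; simp only [mem_preimage, mem_ofPred_eq, lt_div_iff₀ hg]
  rw [hslice, expMeasure_prod_setOf_lt_add hr (by positivity), mul_assoc]

end ProbabilityTheory

/-- Survival function of `V = ((E + E')/2)/G` (the case `w = 1/2`), with `E, E'` iid
standard exponential and `G ~ Gamma(1/ξ, 1)` independent: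
`P(V > x) = (1 + 2x)^{-1/ξ - 1} (1 + 2x(1 + 1/ξ))` for `x ≥ 0`. -/
theorem surv_V_half_w
    {Ω : Type*} [MeasurableSpace Ω] (μ : Measure Ω) [IsProbabilityMeasure μ]
    (E E' G : Ω → ℝ) (hEm : Measurable E) (hE'm : Measurable E') (hGm : Measurable G)
    (ξ : ℝ) (hξ : 0 < ξ)
    (hE : μ.map E = expMeasure 1) (hE' : μ.map E' = expMeasure 1)
    (hG : μ.map G = gammaMeasure (1 / ξ) 1)
    (hind : iIndepFun (m := fun _ : Fin 3 => (inferInstance : MeasurableSpace ℝ)) ![E, E', G] μ) :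
    ∀ x : ℝ, 0 ≤ x →
      (μ {ω | ((E ω + E' ω) / 2) / G ω > x}).toReal
        = (1 + 2 * x) ^ (-1 / ξ - 1) * (1 + 2 * x * (1 + 1 / ξ)) := by
  intro x hx
  have hevent : {ω | ((E ω + E' ω) / 2) / G ω > x}
      = (fun ω => ((E ω, E' ω), G ω)) ⁻¹' {p : (ℝ × ℝ) × ℝ | 2 * x < (p.1.1 + p.1.2) / p.2} := by
    ext ω
    simp only [mem_preimage, mem_ofPred_eq, gt_iff_lt, div_right_comm _ (2 : ℝ)]
    constructor <;> intro h <;> linarith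
  rw [hevent, ← Measure.map_apply (by fun_prop) (measurableSet_lt measurable_const (by fun_prop)),
    hind.map_prodMk_prodMk_eq_prod_s5 hEm hE'm hGm, hE, hE', hG,
    expMeasure_prod_prod_gammaMeasure_setOf_lt_add_div (by positivity) one_pos one_pos
      (by positivity), ENNReal.toReal_ofReal (by positivity), neg_div]
  simp only [one_rpow, one_mul]
end

section
/- With p_s(x) = [sw/((s+1)w − 1)](1 + x/w)^{−α} − [(1−w)/((s+1)w − 1)](1 + sx/(1−w))^{−α} for s = 1,2, α > 0 and w ∈ (0,1)\{1/2, 1/3}, the limit lim_{x→∞} p₂(x)/p₁(x) exists and equals χ(w, α) = [(2w−1)/(3w−1)] · [2w^{α+1} − 2^{−α}(1−w)^{α+1}] / [w^{α+1} − (1−w)^{α+1}]. -/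
/-!
Each `p_s` is a difference of two shifted power tails, and
`x ^ α * (1 + x / c) ^ (-α) → c ^ α`, so `x ^ α * p_s x` converges to
`(s w ^ (α + 1) - s ^ (-α) (1 - w) ^ (α + 1)) / ((s + 1) w - 1)`.
The limit of `p₂ / p₁` is the ratio of these constants for `s = 2` and `s = 1`;
the one for `s = 1` is nonzero because `w ≠ 1 - w` and `α + 1 ≠ 0`.
-/

open Real Filter Topology

lemma tendsto_rpow_mul_one_add_div_rpow_neg (α : ℝ) {c : ℝ} (hc : 0 < c) :
    Tendsto (fun x : ℝ => x ^ α * (1 + x / c) ^ (-α)) atTop (𝓝 (c ^ α)) := by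
  have hinv : Tendsto (fun x : ℝ => (x⁻¹ + c⁻¹)⁻¹) atTop (𝓝 c) := by
    simpa using (tendsto_inv_atTop_zero.add_const c⁻¹).inv₀ (by simpa using hc.ne')
  refine (hinv.rpow_const (Or.inl hc.ne')).congr' ?_
  filter_upwards [eventually_gt_atTop 0] with x hx
  have hx1 : 0 < 1 + x / c := by positivity
  have hrecip : (x⁻¹ + c⁻¹)⁻¹ = x / (1 + x / c) := by field_simp
  rw [hrecip, div_rpow hx.le hx1.le, rpow_neg hx1.le, div_eq_mul_inv]

lemma tendsto_div_of_tendsto_mul {ι : Type*} {l : Filter ι} {f g h : ι → ℝ} {a b : ℝ}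
    (hf : Tendsto (fun x => f x * h x) l (𝓝 a)) (hg : Tendsto (fun x => g x * h x) l (𝓝 b))
    (hb : b ≠ 0) (hh : ∀ᶠ x in l, h x ≠ 0) :
    Tendsto (fun x => f x / g x) l (𝓝 (a / b)) := by
  refine (hf.div hg hb).congr' ?_
  filter_upwards [hh] with x hx
  exact mul_div_mul_right _ _ hx

lemma tendsto_tail_mixture_mul_rpow (α : ℝ) {w s : ℝ} (hw : w ∈ Set.Ioo (0 : ℝ) 1)
    (hs : 0 < s) :
    Tendsto (fun x : ℝ =>
        (s * w / ((s + 1) * w - 1) * (1 + x / w) ^ (-α)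
          - (1 - w) / ((s + 1) * w - 1) * (1 + s * x / (1 - w)) ^ (-α)) * x ^ α)
      atTop (𝓝 ((s * w ^ (α + 1) - s ^ (-α) * (1 - w) ^ (α + 1)) / ((s + 1) * w - 1))) := by
  obtain ⟨hw0, hw1⟩ := hw
  have h1w : 0 < 1 - w := by linarith
  have hscale : ∀ x : ℝ, 1 + s * x / (1 - w) = 1 + x / ((1 - w) / s) := fun x => by
    field_simp
  have hlim := ((tendsto_rpow_mul_one_add_div_rpow_neg α hw0).const_mul
    (s * w / ((s + 1) * w - 1))).sub
    ((tendsto_rpow_mul_one_add_div_rpow_neg α (div_pos h1w hs)).const_mul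
      ((1 - w) / ((s + 1) * w - 1)))
  have hconst : s * w / ((s + 1) * w - 1) * w ^ α
      - (1 - w) / ((s + 1) * w - 1) * ((1 - w) / s) ^ α
      = (s * w ^ (α + 1) - s ^ (-α) * (1 - w) ^ (α + 1)) / ((s + 1) * w - 1) := by
    rw [rpow_add_one hw0.ne', rpow_add_one h1w.ne', div_rpow h1w.le hs.le, rpow_neg hs.le]
    ring
  rw [hconst] at hlim
  refine hlim.congr fun x => ?_
  rw [hscale]
  ring

/-- With `p_s(x) = [sw/((s+1)w-1)](1+x/w)^{-α} - [(1-w)/((s+1)w-1)](1+sx/(1-w))^{-α}`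
for `s = 1, 2`, `α > 0`, `w ∈ (0,1) \ {1/2, 1/3}`, the limit `p₂(x)/p₁(x)` as `x → ∞`
exists and equals `[(2w-1)/(3w-1)]·[2w^{α+1} - 2^{-α}(1-w)^{α+1}]/[w^{α+1} - (1-w)^{α+1}]`. -/
theorem chi_limit
    (α w : ℝ) (hα : 0 < α) (hw : w ∈ Set.Ioo (0 : ℝ) 1)
    (hw2 : w ≠ 1 / 2) (hw3 : w ≠ 1 / 3) :
    let p : ℝ → ℝ → ℝ := fun s x =>
      s * w / ((s + 1) * w - 1) * (1 + x / w) ^ (-α)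
        - (1 - w) / ((s + 1) * w - 1) * (1 + s * x / (1 - w)) ^ (-α)
    Tendsto (fun x : ℝ => p 2 x / p 1 x) atTop
      (𝓝 ((2 * w - 1) / (3 * w - 1) *
        ((2 * w ^ (α + 1) - 2 ^ (-α) * (1 - w) ^ (α + 1))
          / (w ^ (α + 1) - (1 - w) ^ (α + 1))))) := by
  intro p
  have h2w : 2 * w - 1 ≠ 0 := fun h => hw2 (by linarith)
  have h3w : 3 * w - 1 ≠ 0 := fun h => hw3 (by linarith)
  have hgap : w ^ (α + 1) - (1 - w) ^ (α + 1) ≠ 0 := by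
    rw [sub_ne_zero, Ne, rpow_left_inj hw.1.le (by linarith [hw.2]) (by linarith)]
    exact fun h => hw2 (by linarith)
  have hp2 := tendsto_tail_mixture_mul_rpow α hw (s := 2) two_pos
  have hp1 := tendsto_tail_mixture_mul_rpow α hw (s := 1) one_pos
  norm_num only [one_rpow, one_mul] at hp1 hp2
  convert tendsto_div_of_tendsto_mul hp2 hp1 (div_ne_zero hgap h2w)
      ((eventually_gt_atTop 0).mono fun x hx => (rpow_pos_of_pos hx α).ne') using 2
  · simp only [p]; norm_num
  · field_simp
end
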